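/- arXiv:0805.1211 — 3 statements merged into one kernel-verified Lean document; each statement's English description precedes it below -/
import Mathlib

section
/- Let n ≥ 1 and let a₀,…,aₙ be positive integers with gcd(a₀,…,aₙ) = 1. Let G = (ℤ/a₀ℤ) × ⋯ × (ℤ/aₙℤ) act on ℙⁿ(ℂ) by (k₀,…,kₙ) · [x₀ : ⋯ : xₙ] = [exp(2πi k₀/a₀)·x₀ : ⋯ : exp(2πi kₙ/aₙ)·xₙ]. Then the quotient topological space ℙⁿ(ℂ)/G is homeomorphic to the weighted projective space ℙ(a₀,…,aₙ). -/
/-- The weighted scalar equivalence on `ℂ^{n+1} \ {0}` with weights `a`. -/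
def wprojRel (n : ℕ) (a : Fin (n + 1) → ℕ) (x y : {v : Fin (n + 1) → ℂ // v ≠ 0}) : Prop :=
  ∃ t : ℂ, t ≠ 0 ∧ ∀ i, (y : Fin (n + 1) → ℂ) i = t ^ (a i) * (x : Fin (n + 1) → ℂ) i

/-- The weighted projective space `ℙ(a₀,…,aₙ)` as a quotient topological space. -/
def WProj (n : ℕ) (a : Fin (n + 1) → ℕ) : Type :=
  Quot (wprojRel n a)

instance (n : ℕ) (a : Fin (n + 1) → ℕ) : TopologicalSpace (WProj n a) :=
  inferInstanceAs (TopologicalSpace (Quot (wprojRel n a)))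

/-- Complex projective `n`-space `ℙⁿ(ℂ) = ℙ(1,…,1)`. -/
def ProjSpace (n : ℕ) : Type :=
  WProj n fun _ => 1

instance (n : ℕ) : TopologicalSpace (ProjSpace n) :=
  inferInstanceAs (TopologicalSpace (WProj n fun _ => 1))

/-- The action of `(k₀,…,kₙ) ∈ (ℤ/a₀ℤ) × ⋯ × (ℤ/aₙℤ)` on representatives:
`x i ↦ exp(2πi kᵢ/aᵢ) * x i`. -/
noncomputable def gActRep (n : ℕ) (a : Fin (n + 1) → ℕ) (k : ∀ i, ZMod (a i))
    (x : {v : Fin (n + 1) → ℂ // v ≠ 0}) : {v : Fin (n + 1) → ℂ // v ≠ 0} :=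
  ⟨fun i => Complex.exp (2 * Real.pi * Complex.I * ((k i).val : ℂ) / (a i : ℂ)) * x.1 i, by
    intro h
    apply x.2
    funext i
    have h1 := congrFun h i
    simp only [Pi.zero_apply] at h1 ⊢
    rcases mul_eq_zero.mp h1 with h2 | h2
    · exact absurd h2 (Complex.exp_ne_zero _)
    · exact h2⟩

/-- The orbit relation on `ℙⁿ(ℂ)` of the action of `G = (ℤ/a₀ℤ) × ⋯ × (ℤ/aₙℤ)`. -/
noncomputable def gOrbitRel (n : ℕ) (a : Fin (n + 1) → ℕ) (p q : ProjSpace n) : Prop :=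
  ∃ (k : ∀ i, ZMod (a i)) (x : {v : Fin (n + 1) → ℂ // v ≠ 0}),
    p = Quot.mk (wprojRel n fun _ => 1) x ∧
    q = Quot.mk (wprojRel n fun _ => 1) (gActRep n a k x)

/-!
The map `x ↦ (x₀^{a₀}, …, xₙ^{aₙ})` on `ℂ^{n+1} \ {0}` turns ordinary scaling by `t` into weighted
scaling by `t`, so it descends to `ℙⁿ(ℂ) → ℙ(a₀,…,aₙ)`. Two vectors with the same image differ in
each coordinate by an `aᵢ`-th root of unity, so after scaling the fibres are exactly the `G`-orbits.
The power map is continuous, surjective (`ℂ` is algebraically closed) and open (open mapping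
theorem for `z ↦ z^m`), and so are the quotient maps by scaling; hence the induced bijection
`ℙⁿ(ℂ)/G → ℙ(a₀,…,aₙ)` is a homeomorphism.
-/

open Complex Set Topology
open scoped Real

section NonzeroPiMap

variable {ι : Type*} (f : ι → ℂ → ℂ) (hf : ∀ i z, f i z = 0 → z = 0)

def nonzeroPiMap (x : {v : ι → ℂ // v ≠ 0}) : {v : ι → ℂ // v ≠ 0} :=
  ⟨Pi.map f x.1, fun h => x.2 (funext fun i => hf i _ (congrFun h i))⟩

variable {f hf}

theorem continuous_nonzeroPiMap (hcont : ∀ i, Continuous (f i)) :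
    Continuous (nonzeroPiMap f hf) :=
  (continuous_pi fun i =>
    (hcont i).comp ((continuous_apply i).comp continuous_subtype_val)).subtype_mk _

theorem isOpenMap_nonzeroPiMap (hopen : ∀ i, IsOpenMap (f i))
    (hsurj : ∀ i, Function.Surjective (f i)) : IsOpenMap (nonzeroPiMap f hf) := by
  have hval : IsOpenEmbedding (Subtype.val : {v : ι → ℂ // v ≠ 0} → ι → ℂ) :=
    isOpen_compl_singleton.isOpenEmbedding_subtypeVal
  have hpi : IsOpenMap (Pi.map f) := .piMap hopen (.of_forall hsurj)
  intro U hU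
  rw [hval.isOpen_iff_image_isOpen, image_image]
  exact (hpi.comp hval.isOpenMap) U hU

theorem surjective_nonzeroPiMap (hsurj : ∀ i, Function.Surjective (f i))
    (hzero : ∀ i, f i 0 = 0) : Function.Surjective (nonzeroPiMap f hf) := by
  rintro ⟨y, hy⟩
  choose x hx using fun i => hsurj i (y i)
  have hx0 : x ≠ 0 := by
    rintro rfl
    exact hy (funext fun i => (hx i).symm.trans (hzero i))
  exact ⟨⟨x, hx0⟩, Subtype.ext (funext hx)⟩

end NonzeroPiMap

theorem isOpenMap_pow_complex {m : ℕ} (hm : m ≠ 0) : IsOpenMap fun z : ℂ => z ^ m := by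
  have hanalytic : AnalyticOnNhd ℂ (fun z : ℂ => z ^ m) univ := fun _ _ => analyticAt_id.pow m
  rcases hanalytic.is_constant_or_isOpen isPreconnected_univ with ⟨w, hw⟩ | hopen
  · have h01 : (0 : ℂ) ^ m = 1 ^ m := (hw 0 trivial).trans (hw 1 trivial).symm
    simp [zero_pow hm] at h01
  · exact fun U hU => hopen U (subset_univ U) hU

theorem exp_two_pi_I_mul_div_pow_self (k : ℕ) {m : ℕ} (hm : m ≠ 0) :
    exp (2 * π * I * k / m) ^ m = 1 := by
  rw [← exp_nat_mul, exp_eq_one_iff]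
  exact ⟨k, by field_simp; push_cast; ring⟩

theorem exists_lt_eq_exp_mul_of_pow_eq {m : ℕ} (hm : m ≠ 0) {z w : ℂ} (h : z ^ m = w ^ m) :
    ∃ k < m, z = exp (2 * π * I * k / m) * w := by
  by_cases hw : w = 0
  · subst hw
    refine ⟨0, Nat.pos_of_ne_zero hm, ?_⟩
    rw [mul_zero]
    exact eq_zero_of_pow_eq_zero (h.trans (zero_pow hm))
  have : NeZero m := ⟨hm⟩
  have hroot : (z / w) ^ m = 1 := by rw [div_pow, h, div_self (pow_ne_zero m hw)]
  obtain ⟨k, hk, hζ⟩ := (isPrimitiveRoot_exp m hm).eq_pow_of_pow_eq_one hroot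
  refine ⟨k, hk, ?_⟩
  rw [← exp_nat_mul, mul_div_assoc', mul_comm (k : ℂ)] at hζ
  rw [hζ, div_mul_cancel₀ z hw]

section WeightedProjectiveSpace

theorem wprojRel_equivalence (n : ℕ) (a : Fin (n + 1) → ℕ) : Equivalence (wprojRel n a) where
  refl _ := ⟨1, one_ne_zero, fun _ => by rw [one_pow, one_mul]⟩
  symm := by
    rintro x y ⟨t, ht, h⟩
    refine ⟨t⁻¹, inv_ne_zero ht, fun i => ?_⟩
    rw [h i, ← mul_assoc, ← mul_pow, inv_mul_cancel₀ ht, one_pow, one_mul]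
  trans := by
    rintro x y z ⟨t, ht, h⟩ ⟨s, hs, h'⟩
    exact ⟨s * t, mul_ne_zero hs ht, fun i => by rw [h' i, h i, mul_pow, mul_assoc]⟩

variable {n : ℕ} {a : Fin (n + 1) → ℕ}

theorem wproj_mk_eq_mk_iff {x y : {v : Fin (n + 1) → ℂ // v ≠ 0}} :
    Quot.mk (wprojRel n a) x = Quot.mk (wprojRel n a) y ↔ wprojRel n a x y := by
  rw [Quot.eq, (wprojRel_equivalence n a).eqvGen_iff]

variable (a) in
def wScale (t : ℂˣ) : {v : Fin (n + 1) → ℂ // v ≠ 0} → {v : Fin (n + 1) → ℂ // v ≠ 0} :=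
  nonzeroPiMap (fun i z => (t : ℂ) ^ a i * z)
    fun _ _ h => (mul_eq_zero.mp h).resolve_left (pow_ne_zero _ t.ne_zero)

theorem wprojRel_iff_exists_wScale {x y : {v : Fin (n + 1) → ℂ // v ≠ 0}} :
    wprojRel n a x y ↔ ∃ t : ℂˣ, wScale a t x = y := by
  constructor
  · rintro ⟨t, ht, h⟩
    exact ⟨Units.mk0 t ht, Subtype.ext (funext fun i => (h i).symm)⟩
  · rintro ⟨t, rfl⟩
    exact ⟨t, t.ne_zero, fun _ => rfl⟩

theorem isOpenMap_wproj_mk : IsOpenMap (Quot.mk (wprojRel n a)) := by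
  intro U hU
  have hsaturation : Quot.mk (wprojRel n a) ⁻¹' (Quot.mk (wprojRel n a) '' U) =
      ⋃ t : ℂˣ, wScale a t ⁻¹' U := by
    ext x
    simp only [mem_preimage, mem_image, mem_iUnion, wproj_mk_eq_mk_iff]
    constructor
    · rintro ⟨y, hy, hyx⟩
      obtain ⟨t, rfl⟩ := wprojRel_iff_exists_wScale.mp ((wprojRel_equivalence n a).symm hyx)
      exact ⟨t, hy⟩
    · rintro ⟨t, ht⟩
      exact ⟨_, ht,
        (wprojRel_equivalence n a).symm (wprojRel_iff_exists_wScale.mpr ⟨t, rfl⟩)⟩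
  rw [isOpen_coinduced, hsaturation]
  exact isOpen_iUnion fun t =>
    hU.preimage (continuous_nonzeroPiMap fun _ => continuous_const.mul continuous_id)

variable (a) in
def wPow : {v : Fin (n + 1) → ℂ // v ≠ 0} → {v : Fin (n + 1) → ℂ // v ≠ 0} :=
  nonzeroPiMap (fun i z => z ^ a i) fun _ _ => eq_zero_of_pow_eq_zero

theorem wPow_gActRep (ha : ∀ i, a i ≠ 0) (k : ∀ i, ZMod (a i))
    (x : {v : Fin (n + 1) → ℂ // v ≠ 0}) : wPow a (gActRep n a k x) = wPow a x :=
  Subtype.ext <| funext fun i => by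
    simp only [wPow, nonzeroPiMap, gActRep, Pi.map_apply]
    rw [mul_pow, exp_two_pi_I_mul_div_pow_self _ (ha i), one_mul]

theorem exists_gActRep_of_wprojRel_wPow (ha : ∀ i, a i ≠ 0)
    {x y : {v : Fin (n + 1) → ℂ // v ≠ 0}} (h : wprojRel n a (wPow a x) (wPow a y)) :
    ∃ k : ∀ i, ZMod (a i), wprojRel n (fun _ => 1) (gActRep n a k x) y := by
  obtain ⟨t, ht, hpow⟩ := h
  have hroot (i : Fin (n + 1)) : y.1 i ^ a i = (t * x.1 i) ^ a i := by
    rw [mul_pow]; exact hpow i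
  choose m hm hy using fun i => exists_lt_eq_exp_mul_of_pow_eq (ha i) (hroot i)
  have : ∀ i, NeZero (a i) := fun i => ⟨ha i⟩
  refine ⟨fun i => m i, t, ht, fun i => ?_⟩
  simp only [gActRep, ZMod.val_natCast_of_lt (hm i), pow_one]
  rw [hy i]
  ring

end WeightedProjectiveSpace

section OrbitSpace

variable {n : ℕ} {a : Fin (n + 1) → ℕ}

variable (a) in
def projSpaceToWProj : ProjSpace n → WProj n a :=
  Quot.lift (fun x => Quot.mk _ (wPow a x)) fun x y ⟨t, ht, h⟩ =>
    Quot.sound ⟨t, ht, fun i => by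
      simp only [wPow, nonzeroPiMap, Pi.map_apply, h i, pow_one, mul_pow]⟩

def orbitSpaceToWProj (ha : ∀ i, a i ≠ 0) : Quot (gOrbitRel n a) → WProj n a :=
  Quot.lift (projSpaceToWProj a) fun _ _ ⟨k, x, hp, hq⟩ => by
    subst hp hq
    exact congrArg (Quot.mk _) (wPow_gActRep ha k x).symm

theorem orbitSpaceToWProj_comp_mk (ha : ∀ i, a i ≠ 0) :
    orbitSpaceToWProj ha ∘ Quot.mk (gOrbitRel n a) ∘ Quot.mk (wprojRel n fun _ => 1) =
      Quot.mk (wprojRel n a) ∘ wPow a :=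
  rfl

theorem continuous_orbitSpaceToWProj (ha : ∀ i, a i ≠ 0) : Continuous (orbitSpaceToWProj ha) :=
  continuous_quot_lift _ <| continuous_quot_lift _ <|
    continuous_quot_mk.comp (continuous_nonzeroPiMap fun _ => continuous_pow _)

theorem isOpenMap_orbitSpaceToWProj (ha : ∀ i, a i ≠ 0) : IsOpenMap (orbitSpaceToWProj ha) := by
  refine IsOpenMap.of_comp (continuous_quot_mk.comp continuous_quot_mk)
    (Quot.mk_surjective.comp Quot.mk_surjective) ?_
  rw [orbitSpaceToWProj_comp_mk]
  exact isOpenMap_wproj_mk.comp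
    (isOpenMap_nonzeroPiMap (fun i => isOpenMap_pow_complex (ha i))
      fun i z => IsAlgClosed.exists_pow_nat_eq z (Nat.pos_of_ne_zero (ha i)))

theorem surjective_orbitSpaceToWProj (ha : ∀ i, a i ≠ 0) :
    Function.Surjective (orbitSpaceToWProj ha) := by
  refine .of_comp (g := Quot.mk (gOrbitRel n a) ∘ Quot.mk (wprojRel n fun _ => 1)) ?_
  rw [orbitSpaceToWProj_comp_mk]
  exact Quot.mk_surjective.comp <|
    surjective_nonzeroPiMap
      (fun i z => IsAlgClosed.exists_pow_nat_eq z (Nat.pos_of_ne_zero (ha i)))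
      fun i => zero_pow (ha i)

theorem injective_orbitSpaceToWProj (ha : ∀ i, a i ≠ 0) :
    Function.Injective (orbitSpaceToWProj ha) := by
  rintro ⟨⟨x⟩⟩ ⟨⟨y⟩⟩ h
  obtain ⟨k, hk⟩ := exists_gActRep_of_wprojRel_wPow ha (wproj_mk_eq_mk_iff.mp h)
  exact Quot.sound ⟨k, x, rfl, (Quot.sound hk).symm⟩

end OrbitSpace

theorem projSpace_quotient_homeomorph_wproj_general
    (n : ℕ) (a : Fin (n + 1) → ℕ) (ha : ∀ i, 0 < a i) :
    Nonempty (Quot (gOrbitRel n a) ≃ₜ WProj n a) := by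
  have ha' : ∀ i, a i ≠ 0 := fun i => (ha i).ne'
  have hbij : Function.Bijective (orbitSpaceToWProj ha') :=
    ⟨injective_orbitSpaceToWProj ha', surjective_orbitSpaceToWProj ha'⟩
  exact ⟨(Equiv.ofBijective _ hbij).toHomeomorphOfContinuousOpen
    (continuous_orbitSpaceToWProj ha') (isOpenMap_orbitSpaceToWProj ha')⟩

/-- For positive integers `a₀,…,aₙ` with `gcd(a₀,…,aₙ) = 1`, the quotient
of `ℙⁿ(ℂ)` by the coordinatewise action of `(ℤ/a₀ℤ) × ⋯ × (ℤ/aₙℤ)` by roots of unity is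
homeomorphic to the weighted projective space `ℙ(a₀,…,aₙ)`. -/
theorem projSpace_quotient_homeomorph_wproj
    (n : ℕ) (hn : 1 ≤ n) (a : Fin (n + 1) → ℕ) (ha : ∀ i, 0 < a i)
    (hgcd : Finset.univ.gcd a = 1) :
    Nonempty (Quot (gOrbitRel n a) ≃ₜ WProj n a) :=
  projSpace_quotient_homeomorph_wproj_general n a ha
end

section
/- Let n ≥ 1 and let a₀,…,aₙ be positive integers. Then the weighted projective space ℙ(a₀,…,aₙ), with its quotient topology, is simply connected. -/
/-!
The charts `U j = {[x] | x j ≠ 0}` cover `ℙ(a)`, and each is contractible: the homotopy that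
keeps `x j` and multiplies the other coordinates by `s ∈ [0, 1]` commutes with the weighted
`ℂ*`-action, so it descends to `U j`, and at `s = 0` it lands on `[0 : … : x j : … : 0]`,
which is the point `[0 : … : 1 : … : 0]` because `x j` has an `a j`-th root. Every point `[x]`
is joined to `[1 : … : 1]` by `s ↦ [exp (s log x i)]` (with `1 - s` in the zero coordinates),
a path that stays in every chart containing `[x]`.

For such a cover, fix these paths `c y` from the base point. Along any path `p`, the relation
"`c (p s)` followed by `p` from `s` to `t` is homotopic to `c (p t)`" is transitive and holds for
`t` near `s`, since then all the paths involved lie in one simply connected chart; by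
connectedness of `[0, 1]` it holds from `0` to `1`. So `c x ⬝ p ≃ c y` for every path `p` from
`x` to `y`, and any two such paths are homotopic.
-/

open Set Topology unitInterval

section Cover

variable {X ι : Type*} [TopologicalSpace X]

theorem Path.Homotopic.of_range_subset {S : Set X} (hS : IsSimplyConnected S) {x y : X}
    {p₁ p₂ : Path x y} (h₁ : range p₁ ⊆ S) (h₂ : range p₂ ⊆ S) : p₁.Homotopic p₂ := by
  have := hS.simplyConnectedSpace
  let lift (p : Path x y) (hp : range p ⊆ S) :
      Path (⟨x, hp ⟨0, p.source⟩⟩ : S) ⟨y, hp ⟨1, p.target⟩⟩ :=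
    { toFun t := ⟨p t, hp (mem_range_self t)⟩
      source' := Subtype.ext p.source
      target' := Subtype.ext p.target }
  exact (SimplyConnectedSpace.paths_homotopic (lift p₁ h₁) (lift p₂ h₂)).map
    ⟨Subtype.val, continuous_subtype_val⟩

theorem Path.Homotopic.of_trans_left {x₀ x y : X} {c : Path x₀ x} {p₁ p₂ : Path x y}
    (h : (c.trans p₁).Homotopic (c.trans p₂)) : p₁.Homotopic p₂ := by
  rw [← Quotient.eq] at h ⊢
  rw [Quotient.mk_trans, Quotient.mk_trans] at h
  simpa only [← Quotient.trans_assoc, Quotient.symm_trans, Quotient.refl_trans] using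
    congrArg (Quotient.trans (Quotient.symm (Quotient.mk c))) h

theorem Path.homotopic_trans_of_isOpen_cover {U : ι → Set X} (hU : ∀ j, IsOpen (U j))
    (hsc : ∀ j, IsSimplyConnected (U j)) (hcover : ⋃ j, U j = univ) {x₀ : X}
    (c : ∀ x, Path x₀ x) (hc : ∀ x j, x ∈ U j → range (c x) ⊆ U j) {x y : X} (p : Path x y) :
    ((c x).trans p).Homotopic (c y) := by
  let R (s t : I) : Prop :=
    ∃ γ : Path s t, ((c (p s)).trans (γ.map p.continuous)).Homotopic (c (p t))
  have hR_trans : IsTrans I R := ⟨fun s t u ⟨γ₁, h₁⟩ ⟨γ₂, h₂⟩ ↦ ⟨γ₁.trans γ₂, by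
    rw [map_trans]
    exact ((Homotopic.trans_assoc _ _ _).symm.trans (h₁.hcomp (.refl _))).trans h₂⟩⟩
  have hR_local (t : I) : ∀ᶠ s in 𝓝 t, R t s ∧ R s t := by
    obtain ⟨j, hj⟩ := mem_iUnion.1 (hcover.symm ▸ mem_univ (p t))
    have := (convex_Icc (0 : ℝ) 1).locallyPathConnectedSpace
    filter_upwards [pathComponentIn_mem_nhds
      (p.continuous.continuousAt.preimage_mem_nhds ((hU j).mem_nhds hj))] with s ⟨γ, hγ⟩
    have hγU : range (γ.map p.continuous) ⊆ U j := range_subset_iff.2 hγ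
    have hs : p s ∈ U j := by simpa using hγ 1
    refine ⟨⟨γ, .of_range_subset (hsc j) ?_ (hc _ _ hs)⟩,
      ⟨γ.symm, .of_range_subset (hsc j) ?_ (hc _ _ hj)⟩⟩
    · rw [trans_range]
      exact union_subset (hc _ _ hj) hγU
    · rw [trans_range, ← map_symm, symm_range]
      exact union_subset (hc _ _ hs) hγU
  obtain ⟨γ, hγ⟩ := PreconnectedSpace.induction₂' R hR_local hR_trans 0 1
  have hp : (γ.map p.continuous).Homotopic (p.cast p.source p.target) :=
    ⟨(Homotopy.reparam _ γ γ.continuous γ.source γ.target).symm⟩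
  -- `p 0` and `p 1` are only propositionally equal to `x` and `y`.
  have transport {a b : X} (ha : a = x) (hb : b = y) :
      ((c a).trans (p.cast ha hb)).Homotopic (c b) → ((c x).trans p).Homotopic (c y) := by
    subst ha hb; exact id
  exact transport p.source p.target (((Homotopic.refl _).hcomp hp.symm).trans hγ)

theorem SimplyConnectedSpace.of_isOpen_cover {U : ι → Set X} (hU : ∀ j, IsOpen (U j))
    (hsc : ∀ j, IsSimplyConnected (U j)) (hcover : ⋃ j, U j = univ) {x₀ : X}
    (hc : ∀ x, ∃ γ : Path x₀ x, ∀ j, x ∈ U j → range γ ⊆ U j) : SimplyConnectedSpace X := by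
  choose c hc using hc
  have hstar {x y : X} (p : Path x y) := Path.homotopic_trans_of_isOpen_cover hU hsc hcover c hc p
  exact simply_connected_iff_paths_homotopic'.2 ⟨⟨⟨x₀⟩, fun x y ↦ ⟨(c x).symm.trans (c y)⟩⟩,
    fun p₁ p₂ ↦ .of_trans_left ((hstar p₁).trans (hstar p₂).symm)⟩

end Cover

namespace WProj

variable {n : ℕ} {a : Fin (n + 1) → ℕ}

abbrev Punctured (n : ℕ) : Type := {v : Fin (n + 1) → ℂ // v ≠ 0}

theorem exists_coord_ne_zero (x : Punctured n) : ∃ j, x.1 j ≠ 0 :=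
  Function.ne_iff.1 x.2

def smul (a : Fin (n + 1) → ℕ) (t : ℂˣ) (x : Punctured n) : Punctured n :=
  ⟨fun i ↦ (t : ℂ) ^ a i * x.1 i, fun h ↦ x.2 <| funext fun i ↦ by
    simpa using congrFun h i⟩

@[simp] theorem smul_apply (t : ℂˣ) (x : Punctured n) (i : Fin (n + 1)) :
    (smul a t x).1 i = (t : ℂ) ^ a i * x.1 i := rfl

theorem smul_one (x : Punctured n) : smul a 1 x = x := by
  ext i; simp

theorem smul_mul (s t : ℂˣ) (x : Punctured n) : smul a (s * t) x = smul a s (smul a t x) := by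
  ext i; simp [mul_pow, mul_assoc]

theorem continuous_smul (t : ℂˣ) : Continuous (smul (n := n) a t) := by
  refine .subtype_mk (continuous_pi fun i ↦ ?_) _
  exact continuous_const.mul ((continuous_apply i).comp continuous_subtype_val)

def smulHomeomorph (a : Fin (n + 1) → ℕ) (t : ℂˣ) : Punctured n ≃ₜ Punctured n where
  toFun := smul a t
  invFun := smul a t⁻¹
  left_inv x := by rw [← smul_mul, inv_mul_cancel, smul_one]
  right_inv x := by rw [← smul_mul, mul_inv_cancel, smul_one]
  continuous_toFun := continuous_smul t
  continuous_invFun := continuous_smul t⁻¹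

theorem wprojRel_iff {x y : Punctured n} : wprojRel n a x y ↔ ∃ t : ℂˣ, smul a t x = y := by
  constructor
  · rintro ⟨t, ht, h⟩
    exact ⟨Units.mk0 t ht, Subtype.ext (funext fun i ↦ (h i).symm)⟩
  · rintro ⟨t, rfl⟩
    exact ⟨t, t.ne_zero, fun i ↦ rfl⟩

theorem equivalence_wprojRel : Equivalence (wprojRel n a) where
  refl x := wprojRel_iff.2 ⟨1, smul_one x⟩
  symm {x y} h := by
    obtain ⟨t, rfl⟩ := wprojRel_iff.1 h
    exact wprojRel_iff.2 ⟨t⁻¹, (smulHomeomorph a t).left_inv x⟩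
  trans h₁ h₂ := by
    obtain ⟨s, rfl⟩ := wprojRel_iff.1 h₁
    obtain ⟨t, rfl⟩ := wprojRel_iff.1 h₂
    exact wprojRel_iff.2 ⟨t * s, smul_mul t s _⟩

def mk (a : Fin (n + 1) → ℕ) : Punctured n → WProj n a := Quot.mk _

theorem mk_eq_mk_iff {x y : Punctured n} : mk a x = mk a y ↔ ∃ t : ℂˣ, smul a t x = y := by
  change Quot.mk (wprojRel n a) x = (Quot.mk _ y : Quot (wprojRel n a)) ↔ _
  rw [Quot.eq, equivalence_wprojRel.eqvGen_iff, wprojRel_iff]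

theorem preimage_mk_image_mk (W : Set (Punctured n)) :
    mk a ⁻¹' (mk a '' W) = ⋃ t : ℂˣ, smul a t '' W := by
  ext y
  simp only [mem_preimage, mem_image, mem_iUnion, mk_eq_mk_iff]
  exact ⟨fun ⟨x, hx, t, hy⟩ ↦ ⟨t, x, hx, hy⟩, fun ⟨t, x, hx, hy⟩ ↦ ⟨x, hx, t, hy⟩⟩

theorem isQuotientMap_mk : IsQuotientMap (mk (n := n) a) := isQuotientMap_quot_mk

theorem isOpenQuotientMap_mk : IsOpenQuotientMap (mk (n := n) a) := by
  refine .of_isOpenMap_isQuotientMap (fun W hW ↦ ?_) isQuotientMap_mk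
  rw [← isQuotientMap_mk.isOpen_preimage, preimage_mk_image_mk]
  exact isOpen_iUnion fun t ↦ (smulHomeomorph a t).isOpenMap W hW

def chart (a : Fin (n + 1) → ℕ) (j : Fin (n + 1)) : Set (WProj n a) :=
  mk a '' {x | x.1 j ≠ 0}

theorem mk_mem_chart {x : Punctured n} {j : Fin (n + 1)} : mk a x ∈ chart a j ↔ x.1 j ≠ 0 := by
  refine ⟨?_, fun hx ↦ ⟨x, hx, rfl⟩⟩
  rintro ⟨y, hy, hyx⟩
  obtain ⟨t, rfl⟩ := mk_eq_mk_iff.1 hyx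
  exact mul_ne_zero (pow_ne_zero _ t.ne_zero) hy

theorem isOpen_chart (j : Fin (n + 1)) : IsOpen (chart a j) :=
  isOpenQuotientMap_mk.isOpenMap _ <|
    isOpen_ne_fun ((continuous_apply j).comp continuous_subtype_val) continuous_const

theorem iUnion_chart : ⋃ j, chart a j = univ := by
  refine eq_univ_of_forall fun y ↦ ?_
  obtain ⟨x, rfl⟩ := isOpenQuotientMap_mk.surjective y
  obtain ⟨j, hj⟩ := exists_coord_ne_zero x
  exact mem_iUnion.2 ⟨j, mk_mem_chart.2 hj⟩

def squash (j : Fin (n + 1)) (s : ℂ) (v : Fin (n + 1) → ℂ) : Fin (n + 1) → ℂ :=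
  Function.update (s • v) j (v j)

@[simp] theorem squash_apply_self (j : Fin (n + 1)) (s : ℂ) (v : Fin (n + 1) → ℂ) :
    squash j s v j = v j :=
  Function.update_self ..

theorem squash_one (j : Fin (n + 1)) (v : Fin (n + 1) → ℂ) : squash j 1 v = v := by
  simp [squash]

theorem squash_zero (j : Fin (n + 1)) (v : Fin (n + 1) → ℂ) :
    squash j 0 v = Pi.single j (v j) := by
  simp [squash, Pi.single]

theorem squash_mul (j : Fin (n + 1)) (s : ℂ) (c v : Fin (n + 1) → ℂ) :
    squash j s (c * v) = c * squash j s v := by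
  ext i
  rcases eq_or_ne i j with rfl | hij
  · simp
  · simp [squash, Function.update_of_ne hij, mul_left_comm]

theorem continuous_squash (j : Fin (n + 1)) :
    Continuous fun p : ℂ × (Fin (n + 1) → ℂ) ↦ squash j p.1 p.2 :=
  (continuous_fst.smul continuous_snd).update j ((continuous_apply j).comp continuous_snd)

def chartCenter (a : Fin (n + 1) → ℕ) (j : Fin (n + 1)) : WProj n a :=
  mk a ⟨Pi.single j 1, by simp⟩

theorem mk_single_eq_chartCenter {j : Fin (n + 1)} (haj : 0 < a j) {z : ℂ} (hz : z ≠ 0) :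
    mk a ⟨Pi.single j z, by simpa⟩ = chartCenter a j := by
  obtain ⟨t, rfl⟩ := IsAlgClosed.exists_pow_nat_eq z haj
  have ht : t ≠ 0 := by rintro rfl; exact hz (zero_pow haj.ne')
  refine (mk_eq_mk_iff.2 ⟨Units.mk0 t ht, Subtype.ext ?_⟩).symm
  ext i
  rcases eq_or_ne i j with rfl | hij <;> simp [*]

def squashChart (a : Fin (n + 1) → ℕ) (j : Fin (n + 1)) :
    C(I × (mk a ⁻¹' chart a j), chart a j) where
  toFun p := ⟨mk a ⟨squash j (p.1 : ℝ) p.2.1.1,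
    fun h ↦ mk_mem_chart.1 p.2.2 (by simpa using congrFun h j)⟩,
    mk_mem_chart.2 (by simpa using mk_mem_chart.1 p.2.2)⟩
  continuous_toFun := by
    refine .subtype_mk (isOpenQuotientMap_mk.continuous.comp (.subtype_mk ?_ _)) _
    exact (continuous_squash j).comp <| (Complex.continuous_ofReal.comp
      (continuous_subtype_val.comp continuous_fst)).prodMk
      (continuous_subtype_val.comp (continuous_subtype_val.comp continuous_snd))

theorem squashChart_factorsThrough (j : Fin (n + 1)) :
    Function.FactorsThrough (squashChart a j)
      (Prod.map id ((chart a j).restrictPreimage (mk a))) := by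
  rintro ⟨s, x⟩ ⟨s', y⟩ h
  obtain ⟨rfl, hxy⟩ := Prod.ext_iff.1 h
  obtain ⟨t, hy⟩ := mk_eq_mk_iff.1 (congrArg Subtype.val hxy)
  refine Subtype.ext (mk_eq_mk_iff.2 ⟨t, Subtype.ext ?_⟩)
  change _ * _ = squash j _ y.1.1
  rw [← hy]
  exact (squash_mul j _ _ _).symm

theorem contractibleSpace_chart {j : Fin (n + 1)} (haj : 0 < a j) :
    ContractibleSpace (chart a j) := by
  set π := (chart a j).restrictPreimage (mk a)
  have hπ : IsOpenQuotientMap π := isOpenQuotientMap_mk.restrictPreimage _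
  let πI : C(I × mk a ⁻¹' chart a j, I × chart a j) :=
    ⟨Prod.map id π, continuous_id.prodMap hπ.continuous⟩
  have hq : IsQuotientMap πI := (IsOpenQuotientMap.id.prodMap hπ).isQuotientMap
  let H := hq.lift (squashChart a j) (squashChart_factorsThrough j)
  have hH (s : I) (x : mk a ⁻¹' chart a j) : H (s, π x) = squashChart a j (s, x) :=
    DFunLike.congr_fun (hq.lift_comp (squashChart a j) (squashChart_factorsThrough j)) (s, x)
  rw [contractible_iff_id_nullhomotopic]
  refine ⟨⟨chartCenter a j, mk_mem_chart.2 (by simp)⟩, ContinuousMap.Homotopic.symm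
    ⟨{ toContinuousMap := H, map_zero_left := fun y ↦ ?_, map_one_left := fun y ↦ ?_ }⟩⟩
  · obtain ⟨x, rfl⟩ := hπ.surjective y
    change H (0, π x) = _
    rw [hH]
    refine Subtype.ext (.trans ?_ (mk_single_eq_chartCenter haj (mk_mem_chart.1 x.2)))
    exact congrArg (mk a) (Subtype.ext (by simp [squash_zero]))
  · obtain ⟨x, rfl⟩ := hπ.surjective y
    change H (1, π x) = _
    rw [hH]
    exact Subtype.ext (congrArg (mk a) (Subtype.ext (by simp [squash_one])))

noncomputable def rayPath (x : Punctured n) : Path (⟨1, one_ne_zero⟩ : Punctured n) x where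
  toFun s := ⟨fun i ↦
      if x.1 i = 0 then 1 - (s : ℝ) else Complex.exp ((s : ℝ) * Complex.log (x.1 i)),
    fun h ↦ by
      obtain ⟨j, hj⟩ := exists_coord_ne_zero x
      have hj' := congrFun h j
      rw [if_neg hj] at hj'
      exact Complex.exp_ne_zero _ hj'⟩
  continuous_toFun := .subtype_mk (continuous_pi fun i ↦ by split_ifs <;> fun_prop) _
  source' := by ext i; by_cases h : x.1 i = 0 <;> simp [h]
  target' := by ext i; by_cases h : x.1 i = 0 <;> simp [h, Complex.exp_log]

theorem rayPath_apply_ne_zero {x : Punctured n} {j : Fin (n + 1)} (hj : x.1 j ≠ 0) (s : I) :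
    (rayPath x s).1 j ≠ 0 := by
  simp [rayPath, hj, Complex.exp_ne_zero]

theorem exists_path_forall_chart (y : WProj n a) :
    ∃ γ : Path (mk a ⟨1, one_ne_zero⟩) y, ∀ j, y ∈ chart a j → range γ ⊆ chart a j := by
  obtain ⟨x, rfl⟩ := isOpenQuotientMap_mk.surjective y
  refine ⟨(rayPath x).map isOpenQuotientMap_mk.continuous, fun j hj ↦ ?_⟩
  rintro _ ⟨s, rfl⟩
  exact mk_mem_chart.2 (rayPath_apply_ne_zero (mk_mem_chart.1 hj) s)

end WProj

theorem wproj_simplyConnected_general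
    (n : ℕ) (a : Fin (n + 1) → ℕ) (ha : ∀ i, 0 < a i) :
    SimplyConnectedSpace (WProj n a) := by
  refine SimplyConnectedSpace.of_isOpen_cover WProj.isOpen_chart (fun j ↦ ?_) WProj.iUnion_chart
    WProj.exists_path_forall_chart
  have := WProj.contractibleSpace_chart (ha j)
  exact SimplyConnectedSpace.ofContractible _

/-- Every weighted projective space `ℙ(a₀,…,aₙ)` (with positive weights,
`n ≥ 1`) is simply connected. -/
theorem wproj_simplyConnected
    (n : ℕ) (hn : 1 ≤ n) (a : Fin (n + 1) → ℕ) (ha : ∀ i, 0 < a i) :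
    SimplyConnectedSpace (WProj n a) :=
  wproj_simplyConnected_general n a ha
end

section
/- Let r ≥ 1 and let A be an invertible 3 × 3 complex matrix such that: (i) the image of A in PGL₃(ℂ) has order exactly r, i.e. the least k ≥ 1 for which Aᵏ is a scalar matrix is k = r; and (ii) the set of points p ∈ ℙ²(ℂ) for which there exists k with 1 ≤ k < r such that the projective transformation induced by Aᵏ fixes p is finite. Then there exist a primitive r-th root of unity ε, an integer a with gcd(a, r) = 1 and gcd(a + 1, r) = 1, an invertible matrix P ∈ GL₃(ℂ), and a nonzero scalar c ∈ ℂ*, such that P A P⁻¹ = c · diag(1, ε^{a}, ε^{a+1}). -/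
/-- The scalar equivalence on `ℂ³ \ {0}`. -/
def projRel3 (x y : {v : Fin 3 → ℂ // v ≠ 0}) : Prop :=
  ∃ t : ℂ, t ≠ 0 ∧ ∀ i, (y : Fin 3 → ℂ) i = t * (x : Fin 3 → ℂ) i

/-- The complex projective plane `ℙ²(ℂ)`, as the quotient topological space of
`ℂ³ \ {0}` by scalar multiplication. -/
def P2 : Type := Quot projRel3

instance : TopologicalSpace P2 := inferInstanceAs (TopologicalSpace (Quot projRel3))

/-- The projective transformation of `ℙ²(ℂ)` induced by the invertible matrix `B` fixes
the point `p`: some (equivalently any) representative of `p` is an eigenvector of `B`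
with nonzero eigenvalue. -/
def projFixes (B : Matrix (Fin 3) (Fin 3) ℂ) (p : P2) : Prop :=
  ∃ (x : {v : Fin 3 → ℂ // v ≠ 0}) (t : ℂ), t ≠ 0 ∧ Quot.mk projRel3 x = p ∧
    B.mulVec (x : Fin 3 → ℂ) = t • (x : Fin 3 → ℂ)

/-!
Since `A ^ r = c • 1` with `c ≠ 0`, the matrix `A` is annihilated by the separable polynomial
`X ^ r - c`, so it is diagonalizable with eigenvalues `μ₀, μ₁, μ₂` satisfying `μᵢ ^ r = c`.
If `μᵢ ^ k = μⱼ ^ k` for some `i ≠ j` and `0 < k < r`, then `A ^ k` fixes every point of the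
projective line through the corresponding eigenvectors, contradicting the finiteness of the fixed
locus. Hence every ratio `μᵢ / μⱼ` is a primitive `r`-th root of unity. Writing `ε = μ₂ / μ₁` and
`μ₁ / μ₀ = ε ^ a` gives `μ₂ / μ₀ = ε ^ (a + 1)`, and the primitivity of these two powers of `ε`
is exactly `gcd(a, r) = gcd(a + 1, r) = 1`.
-/

open Matrix

theorem projRel3_equivalence : Equivalence projRel3 where
  refl _ := ⟨1, one_ne_zero, fun _ => (one_mul _).symm⟩
  symm := by
    rintro _ _ ⟨t, ht, h⟩
    exact ⟨t⁻¹, inv_ne_zero ht, fun i => by rw [h i, inv_mul_cancel_left₀ ht]⟩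
  trans := by
    rintro _ _ _ ⟨t, ht, h⟩ ⟨u, hu, h'⟩
    exact ⟨u * t, mul_ne_zero hu ht, fun i => by rw [h' i, h i, mul_assoc]⟩

theorem quot_mk_projRel3_eq_iff {x y : {v : Fin 3 → ℂ // v ≠ 0}} :
    Quot.mk projRel3 x = Quot.mk projRel3 y ↔ projRel3 x y :=
  Quot.eq.trans projRel3_equivalence.eqvGen_iff

theorem setOf_projFixes_infinite {B : Matrix (Fin 3) (Fin 3) ℂ} {v w : Fin 3 → ℂ}
    (hvw : LinearIndependent ℂ ![v, w]) {t : ℂ} (ht : t ≠ 0)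
    (hv : B *ᵥ v = t • v) (hw : B *ᵥ w = t • w) : {p | projFixes B p}.Infinite := by
  have hne : ∀ s : ℂ, v + s • w ≠ 0 := fun s h =>
    one_ne_zero (LinearIndependent.pair_iff.mp hvw 1 s (by rwa [one_smul])).1
  let line (s : ℂ) : P2 := Quot.mk projRel3 ⟨v + s • w, hne s⟩
  have hline_inj : Function.Injective line := by
    intro s s' hss'
    obtain ⟨u, -, hu⟩ := quot_mk_projRel3_eq_iff.mp hss'
    have hcomb : (1 - u) • v + (s' - u * s) • w = 0 := by
      have : v + s' • w = u • (v + s • w) := funext fun i => by simpa using hu i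
      linear_combination (norm := module) this
    obtain ⟨hu1, hs⟩ := LinearIndependent.pair_iff.mp hvw _ _ hcomb
    linear_combination s * hu1 - hs
  refine Set.infinite_of_injective_forall_mem hline_inj fun s => ⟨_, t, ht, rfl, ?_⟩
  simp only [mulVec_add, mulVec_smul, hv, hw, smul_add, smul_comm s t]

theorem Matrix.pow_mulVec_of_mulVec_eq_smul {R n : Type*} [CommSemiring R] [Fintype n]
    [DecidableEq n] {A : Matrix n n R} {v : n → R} {μ : R} (h : A *ᵥ v = μ • v) (k : ℕ) :
    (A ^ k) *ᵥ v = μ ^ k • v := by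
  induction k with
  | zero => simp
  | succ k ih => rw [pow_succ', ← mulVec_mulVec, ih, mulVec_smul, h, smul_smul, pow_succ]

theorem Matrix.isSemisimple_toLin'_of_pow_eq_smul_one {K n : Type*} [Field K] [Fintype n]
    [DecidableEq n] {A : Matrix n n K} {r : ℕ} {c : K} (hr : (r : K) ≠ 0) (hc : c ≠ 0)
    (hA : A ^ r = c • 1) : Module.End.IsSemisimple (toLin' A) := by
  refine Module.End.isSemisimple_of_squarefree_aeval_eq_zero
    (Polynomial.separable_X_pow_sub_C c hr hc).squarefree ?_
  rw [show toLin' A = toLinAlgEquiv' A from rfl, Polynomial.aeval_algHom_apply]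
  simp [hA, Algebra.algebraMap_eq_smul_one]

theorem Matrix.exists_basis_mulVec_eq_smul_of_isSemisimple {K n : Type*} [Field K]
    [IsAlgClosed K] [Fintype n] [DecidableEq n] {A : Matrix n n K}
    (hA : Module.End.IsSemisimple (toLin' A)) :
    ∃ (b : Module.Basis n K (n → K)) (μ : n → K), ∀ i, A *ᵥ b i = μ i • b i := by
  have hspan : ⊤ ≤ Submodule.span K {v | ∃ μ : K, A *ᵥ v = μ • v} := by
    rw [← hA.iSup_eigenspace_eq_top]
    exact iSup_le fun μ v hv =>
      Submodule.subset_span ⟨μ, by simpa using Module.End.mem_eigenspace_iff.mp hv⟩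
  let b₀ := Module.Basis.ofSpan hspan
  let b := b₀.reindex (b₀.indexEquiv (Pi.basisFun K n))
  have hb : ∀ i, ∃ μ : K, A *ᵥ b i = μ • b i := fun i =>
    Module.Basis.ofSpan_subset hspan ⟨_, (b₀.reindex_apply _ i).symm⟩
  choose μ hμ using hb
  exact ⟨b, μ, hμ⟩

theorem Module.Basis.toMatrix_mul_mul_inv_eq_diagonal {R n : Type*} [CommRing R] [Fintype n]
    [DecidableEq n] {A : Matrix n n R} {b : Module.Basis n R (n → R)} {μ : n → R}
    (hb : ∀ i, A *ᵥ b i = μ i • b i) :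
    b.toMatrix (Pi.basisFun R n) * A * (b.toMatrix (Pi.basisFun R n))⁻¹ = diagonal μ := by
  rw [inv_eq_right_inv (b.toMatrix_mul_toMatrix_flip _)]
  have hchange := basis_toMatrix_mul_linearMap_toMatrix_mul_basis_toMatrix
    b (Pi.basisFun R n) b (Pi.basisFun R n) (toLin' A)
  rw [LinearMap.toMatrix_eq_toMatrix', LinearMap.toMatrix'_toLin'] at hchange
  rw [hchange]
  ext i j
  rw [LinearMap.toMatrix_apply, toLin'_apply, hb, map_smul, b.repr_self, diagonal_apply]
  split_ifs with h <;> simp [h]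

theorem injective_eigenvalues_of_setOf_projFixes_finite {B : Matrix (Fin 3) (Fin 3) ℂ}
    {b : Module.Basis (Fin 3) ℂ (Fin 3 → ℂ)} {μ : Fin 3 → ℂ} (hb : ∀ i, B *ᵥ b i = μ i • b i)
    (hμ : ∀ i, μ i ≠ 0) (hfin : {p | projFixes B p}.Finite) : Function.Injective μ := by
  intro i j hij
  by_contra hne
  have hpair : LinearIndependent ℂ ![b i, b j] := LinearIndependent.pair_iff.mpr
    ((LinearIndepOn.pair_iff b hne).mp (b.linearIndependent.linearIndepOn _))
  exact setOf_projFixes_infinite hpair (hμ i) (hb i) (hij ▸ hb j) hfin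

theorem isPrimitiveRoot_div_of_pow_eq {K : Type*} [Field K] {x y : K} {r : ℕ} (hr : 0 < r)
    (hy : y ≠ 0) (hxy : x ^ r = y ^ r) (hne : ∀ k, 0 < k → k < r → x ^ k ≠ y ^ k) :
    IsPrimitiveRoot (x / y) r := by
  refine IsPrimitiveRoot.mk_of_lt _ hr ?_ fun k hk hkr => ?_
  · rw [div_pow, hxy, div_self (pow_ne_zero _ hy)]
  · rw [div_pow, ne_eq, div_eq_one_iff_eq (pow_ne_zero _ hy)]
    exact hne k hk hkr

theorem exists_isPrimitiveRoot_eq_smul_of_div_isPrimitiveRoot {K : Type*} [Field K] {r : ℕ}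
    (hr : 0 < r) {μ : Fin 3 → K} (hμ0 : ∀ i, μ i ≠ 0)
    (hprim : ∀ i j, i ≠ j → IsPrimitiveRoot (μ i / μ j) r) :
    ∃ (ε : K) (a : ℤ), IsPrimitiveRoot ε r ∧ Int.gcd a r = 1 ∧ Int.gcd (a + 1) r = 1 ∧
      μ = μ 0 • ![1, ε ^ a, ε ^ (a + 1)] := by
  have h21 := hprim 2 1 (by decide)
  have : NeZero r := ⟨hr.ne'⟩
  obtain ⟨a, -, ha⟩ := h21.eq_pow_of_pow_eq_one (hprim 1 0 (by decide)).pow_eq_one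
  have ha1 : (μ 2 / μ 1) ^ (a + 1) = μ 2 / μ 0 := by
    rw [pow_succ, ha]
    field_simp [hμ0 0, hμ0 1]
  refine ⟨μ 2 / μ 1, a, h21, ?_, ?_, ?_⟩
  · rw [Int.gcd_natCast_natCast]
    exact (h21.pow_iff_coprime hr a).mp (ha ▸ hprim 1 0 (by decide))
  · rw [← Nat.cast_succ, Int.gcd_natCast_natCast]
    exact (h21.pow_iff_coprime hr (a + 1)).mp (ha1 ▸ hprim 2 0 (by decide))
  · rw [← Nat.cast_succ, zpow_natCast, zpow_natCast, ha, ha1]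
    ext i
    fin_cases i <;> simp [mul_div_cancel₀ _ (hμ0 0)]

theorem diagonalizable_of_order_r_finite_fixed_locus_general
    (r : ℕ) (hr : 1 ≤ r) (A : Matrix (Fin 3) (Fin 3) ℂ) (hA : IsUnit A)
    (hAr : ∃ c : ℂ, A ^ r = c • (1 : Matrix (Fin 3) (Fin 3) ℂ))
    (hfix : {p : P2 | ∃ k : ℕ, 1 ≤ k ∧ k < r ∧ projFixes (A ^ k) p}.Finite) :
    ∃ (ε : ℂ) (a : ℤ) (P : Matrix (Fin 3) (Fin 3) ℂ) (c : ℂ),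
      IsPrimitiveRoot ε r ∧ Int.gcd a r = 1 ∧ Int.gcd (a + 1) r = 1 ∧
      IsUnit P ∧ c ≠ 0 ∧
      P * A * P⁻¹ = c • Matrix.diagonal ![(1 : ℂ), ε ^ a, ε ^ (a + 1)] := by
  obtain ⟨c, hc⟩ := hAr
  have hc0 : c ≠ 0 := by
    rintro rfl
    simpa [hc] using hA.pow r
  obtain ⟨b, μ, hμ⟩ := exists_basis_mulVec_eq_smul_of_isSemisimple
    (isSemisimple_toLin'_of_pow_eq_smul_one (Nat.cast_ne_zero.mpr (by omega)) hc0 hc)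
  have hμr : ∀ i, μ i ^ r = c := fun i => smul_left_injective ℂ (b.ne_zero i) <| by
    simp only [← pow_mulVec_of_mulVec_eq_smul (hμ i), hc, smul_mulVec, one_mulVec]
  have hμ0 : ∀ i, μ i ≠ 0 := fun i h => hc0 (by rw [← hμr i, h, zero_pow (by omega)])
  have hprim : ∀ i j, i ≠ j → IsPrimitiveRoot (μ i / μ j) r := fun i j hij =>
    isPrimitiveRoot_div_of_pow_eq hr (hμ0 j) ((hμr i).trans (hμr j).symm) fun k hk hkr =>
      injective_eigenvalues_of_setOf_projFixes_finite
        (fun i => pow_mulVec_of_mulVec_eq_smul (hμ i) k) (pow_ne_zero k <| hμ0 ·)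
        (hfix.subset fun _ hp => ⟨k, hk, hkr, hp⟩) |>.ne hij
  obtain ⟨ε, a, hε, ha, ha1, hμε⟩ :=
    exists_isPrimitiveRoot_eq_smul_of_div_isPrimitiveRoot hr hμ0 hprim
  refine ⟨ε, a, b.toMatrix (Pi.basisFun ℂ _), μ 0, hε, ha, ha1,
    @isUnit_of_invertible _ _ _ (b.invertibleToMatrix _), hμ0 0, ?_⟩
  rw [b.toMatrix_mul_mul_inv_eq_diagonal hμ, ← diagonal_smul, ← hμε]

/-- If `A ∈ GL₃(ℂ)` has order exactly `r` in `PGL₃(ℂ)` and the induced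
`ℤ/rℤ`-action on `ℙ²(ℂ)` has only finitely many points fixed by some nontrivial power,
then `A` is conjugate to `c · diag(1, ε^a, ε^{a+1})` for some scalar `c ≠ 0`, some
primitive `r`-th root of unity `ε`, and some integer `a` with
`gcd(a, r) = gcd(a+1, r) = 1`. -/
theorem diagonalizable_of_order_r_finite_fixed_locus
    (r : ℕ) (hr : 1 ≤ r) (A : Matrix (Fin 3) (Fin 3) ℂ) (hA : IsUnit A)
    (hAr : ∃ c : ℂ, A ^ r = c • (1 : Matrix (Fin 3) (Fin 3) ℂ))
    (hAk : ∀ k : ℕ, 1 ≤ k → k < r → ¬∃ c : ℂ, A ^ k = c • (1 : Matrix (Fin 3) (Fin 3) ℂ))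
    (hfix : {p : P2 | ∃ k : ℕ, 1 ≤ k ∧ k < r ∧ projFixes (A ^ k) p}.Finite) :
    ∃ (ε : ℂ) (a : ℤ) (P : Matrix (Fin 3) (Fin 3) ℂ) (c : ℂ),
      IsPrimitiveRoot ε r ∧ Int.gcd a r = 1 ∧ Int.gcd (a + 1) r = 1 ∧
      IsUnit P ∧ c ≠ 0 ∧
      P * A * P⁻¹ = c • Matrix.diagonal ![(1 : ℂ), ε ^ a, ε ^ (a + 1)] :=
  diagonalizable_of_order_r_finite_fixed_locus_general r hr A hA hAr hfix
end
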